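/- Let Γ be a weighted directed graph on a finite vertex set V and let λ ≠ 1 be an eigenvalue of P := I − Δ with |λ| = r. Then there is a strongly connected component Γ_k of Γ, with vertex set V_k containing at least two vertices, such that λ is an eigenvalue of the Dirichlet operator P_k := I_{V_k} − Δ_{V_k} on C(V_k); moreover, every eigenfunction u : V_k → ℂ of P_k for the eigenvalue λ has constant modulus: |u(i)| = |u(j)| for all i, j ∈ V_k. -/

import Mathlib

/-- In-degree of vertex `i`: `d_i^in = ∑_j w_{ij}`. -/
noncomputable def din {V : Type*} [Fintype V] (w : V → V → ℝ) (i : V) : ℝ :=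
  ∑ j, w i j

/-- The normalized Laplace operator of a weighted directed graph, as a complex matrix. -/
noncomputable def lap {V : Type*} [Fintype V] [DecidableEq V] (w : V → V → ℝ) :
    Matrix V V ℂ :=
  Matrix.of fun i j =>
    if din w i = 0 then 0
    else (if i = j then 1 else 0) - ((w i j / din w i : ℝ) : ℂ)

/-- The Dirichlet Laplace operator `Δ_Ω` on `Ω = S` (in-degrees computed in `Γ`). -/
noncomputable def dlap {V : Type*} [Fintype V] [DecidableEq V] (w : V → V → ℝ)
    (S : Finset V) : Matrix {x // x ∈ S} {x // x ∈ S} ℂ :=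
  Matrix.of fun i j =>
    if din w i.1 = 0 then 0
    else (if i = j then 1 else 0) - ((w i.1 j.1 / din w i.1 : ℝ) : ℂ)

/-- `r(i) = (∑_j |w_{ij}|)/|d_i^in|` if `d_i^in ≠ 0`, and `r(i) = 0` otherwise. -/
noncomputable def rfun {V : Type*} [Fintype V] (w : V → V → ℝ) (i : V) : ℝ :=
  if din w i = 0 then 0 else (∑ j, |w i j|) / |din w i|

/-- `r = max_{i ∈ V} r(i)`. -/
noncomputable def rmax {V : Type*} [Fintype V] [Nonempty V] (w : V → V → ℝ) : ℝ :=
  Finset.univ.sup' Finset.univ_nonempty (rfun w)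

/-- Vertex `j` reaches vertex `i` along directed edges. -/
def reaches {V : Type*} (w : V → V → ℝ) (j i : V) : Prop :=
  Relation.ReflTransGen (fun a b => w b a ≠ 0) j i

/-- `S` is a strongly connected component of `Γ`. -/
def IsSCC {V : Type*} (w : V → V → ℝ) (S : Finset V) : Prop :=
  S.Nonempty ∧ ∀ i ∈ S, ∀ j, j ∈ S ↔ (reaches w i j ∧ reaches w j i)

/-! At a vertex with nonzero in-degree, `λ v(i)` is a weighted average of the eigenvector `v`
whose weights have total modulus at most `r = |λ|`; at a vertex with zero in-degree `v`
vanishes since `λ ≠ 1`. At a vertex where `|v|` is maximal the triangle inequality is thus an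
equality, so every in-neighbour is maximal too, and the maximum spreads to all ancestors.
A maximal vertex with fewest ancestors has ancestors forming a strongly connected component
`S` without incoming edges. The restriction of `v` to `S` is an eigenvector of `P_S`, and the
same maximum principle inside the strongly connected `S` gives every eigenvector of `P_S`
constant modulus. Finally `S` has two vertices since its in-degrees are nonzero and there are
no loops. -/

open Finset Matrix Relation

lemma mem_roots_charpoly_iff_exists_mulVec_eq_smul {n K : Type*} [Fintype n] [DecidableEq n]
    [Field K] (A : Matrix n n K) (μ : K) : μ ∈ A.charpoly.roots ↔ ∃ v, v ≠ 0 ∧ A *ᵥ v = μ • v := by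
  rw [Polynomial.mem_roots A.charpoly_monic.ne_zero, ← mem_spectrum_iff_isRoot_charpoly,
    ← spectrum_toLin', ← Module.End.hasEigenvalue_iff_mem_spectrum,
    Module.End.hasEigenvalue_iff]
  simp [Submodule.ne_bot_iff, and_comm]

lemma norm_eq_of_mul_eq_sum {ι 𝕜 : Type*} [Fintype ι] [NormedDivisionRing 𝕜] {c f : ι → 𝕜}
    {lam z : 𝕜} (hc : ∑ k, ‖c k‖ ≤ ‖lam‖) (hf : ∀ k, ‖f k‖ ≤ ‖z‖)
    (h : lam * z = ∑ k, c k * f k) {j : ι} (hj : c j ≠ 0) : ‖f j‖ = ‖z‖ := by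
  have hle : ∀ k ∈ univ, ‖c k‖ * ‖f k‖ ≤ ‖c k‖ * ‖z‖ := fun k _ =>
    mul_le_mul_of_nonneg_left (hf k) (norm_nonneg _)
  have hsum : ∑ k, ‖c k‖ * ‖f k‖ = ∑ k, ‖c k‖ * ‖z‖ := by
    refine le_antisymm (sum_le_sum hle) ?_
    calc ∑ k, ‖c k‖ * ‖z‖ = (∑ k, ‖c k‖) * ‖z‖ := (sum_mul ..).symm
      _ ≤ ‖lam‖ * ‖z‖ := mul_le_mul_of_nonneg_right hc (norm_nonneg _)
      _ = ‖∑ k, c k * f k‖ := by rw [← norm_mul, h]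
      _ ≤ ∑ k, ‖c k‖ * ‖f k‖ := by
        simpa only [norm_mul] using norm_sum_le univ fun k => c k * f k
  exact mul_left_cancel₀ (norm_ne_zero_iff.mpr hj)
    ((sum_eq_sum_iff_of_le hle).1 hsum j (mem_univ j))

section AveragingMatrix

variable {ι : Type*} [Fintype ι] [DecidableEq ι]

/-- `I - Δ` for weights `a` and in-degrees `d`; a row with `d i = 0` is a row of the identity,
matching `Δ v (i) = 0`. -/
noncomputable def averagingMatrix (a : ι → ι → ℝ) (d : ι → ℝ) : Matrix ι ι ℂ :=
  Matrix.of fun i j => if d i = 0 then (if i = j then 1 else 0) else ((a i j / d i : ℝ) : ℂ)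

variable {a : ι → ι → ℝ} {d : ι → ℝ}

lemma averagingMatrix_mulVec_apply_of_eq_zero (v : ι → ℂ) {i : ι} (hi : d i = 0) :
    (averagingMatrix a d *ᵥ v) i = v i := by
  simp [averagingMatrix, mulVec, dotProduct, hi]

lemma averagingMatrix_mulVec_apply_of_ne_zero (v : ι → ℂ) {i : ι} (hi : d i ≠ 0) :
    (averagingMatrix a d *ᵥ v) i = ∑ j, ((a i j / d i : ℝ) : ℂ) * v j := by
  simp [averagingMatrix, mulVec, dotProduct, hi]

lemma averagingMatrix_subtype_mulVec_apply (S : Finset ι) (v : ι → ℂ) (i : S)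
    (h : ∀ j ∉ S, a i j = 0) :
    (averagingMatrix (fun j k : S => a j k) (fun j : S => d j) *ᵥ fun j : S => v j) i =
      (averagingMatrix a d *ᵥ v) i := by
  by_cases hi : d i = 0
  · rw [averagingMatrix_mulVec_apply_of_eq_zero (d := fun j : S => d j) _ hi,
      averagingMatrix_mulVec_apply_of_eq_zero _ hi]
  · rw [averagingMatrix_mulVec_apply_of_ne_zero (d := fun j : S => d j) _ hi,
      averagingMatrix_mulVec_apply_of_ne_zero _ hi,
      sum_coe_sort S fun j => ((a i j / d i : ℝ) : ℂ) * v j]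
    exact sum_subset (subset_univ S) fun j _ hj => by simp [h j hj]

variable {lam : ℂ} {v : ι → ℂ}

lemma eq_zero_of_averagingMatrix_mulVec_eq_smul (hv : averagingMatrix a d *ᵥ v = lam • v)
    (hlam : lam ≠ 1) {i : ι} (hi : d i = 0) : v i = 0 := by
  have h := congrFun hv i
  rw [averagingMatrix_mulVec_apply_of_eq_zero _ hi, Pi.smul_apply, smul_eq_mul] at h
  by_contra h0
  exact hlam ((mul_eq_right₀ h0).mp h.symm)

lemma norm_eq_of_forall_norm_le_of_ne_zero (hr : ∀ i, d i ≠ 0 → ∑ j, |a i j| ≤ ‖lam‖ * |d i|)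
    (hv : averagingMatrix a d *ᵥ v = lam • v) (hlam : lam ≠ 1) {i : ι}
    (hmax : ∀ j, ‖v j‖ ≤ ‖v i‖) {j : ι} (hij : a i j ≠ 0) : ‖v j‖ = ‖v i‖ := by
  by_cases hi : d i = 0
  · have h0 := eq_zero_of_averagingMatrix_mulVec_eq_smul hv hlam hi
    exact le_antisymm (hmax j) (by simp [h0])
  have hrow : lam * v i = ∑ k, ((a i k / d i : ℝ) : ℂ) * v k := by
    rw [← averagingMatrix_mulVec_apply_of_ne_zero _ hi, hv, Pi.smul_apply, smul_eq_mul]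
  refine norm_eq_of_mul_eq_sum ?_ hmax hrow (by simpa [hi] using hij)
  simp_rw [Complex.norm_real, Real.norm_eq_abs, abs_div, ← sum_div]
  exact div_le_of_le_mul₀ (abs_nonneg _) (norm_nonneg _) (hr i hi)

lemma norm_eq_of_forall_norm_le_of_reflTransGen
    (hr : ∀ i, d i ≠ 0 → ∑ j, |a i j| ≤ ‖lam‖ * |d i|)
    (hv : averagingMatrix a d *ᵥ v = lam • v) (hlam : lam ≠ 1) {i : ι}
    (hmax : ∀ j, ‖v j‖ ≤ ‖v i‖) {j : ι} (hji : ReflTransGen (fun x y => a y x ≠ 0) j i) :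
    ‖v j‖ = ‖v i‖ := by
  induction hji using ReflTransGen.head_induction_on with
  | refl => rfl
  | head hxy _ ih =>
    exact (norm_eq_of_forall_norm_le_of_ne_zero hr hv hlam (ih ▸ hmax) hxy).trans ih

end AveragingMatrix

section Graph

variable {V : Type*} [Fintype V] (w : V → V → ℝ)

lemma one_sub_lap [DecidableEq V] : 1 - lap w = averagingMatrix w (din w) := by
  ext i j
  simp only [averagingMatrix, lap, Matrix.sub_apply, Matrix.one_apply, of_apply]
  split_ifs <;> simp

lemma one_sub_dlap [DecidableEq V] (S : Finset V) :
    1 - dlap w S = averagingMatrix (fun i j : S => w i j) (fun i : S => din w i) := by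
  ext i j
  simp only [averagingMatrix, dlap, Matrix.sub_apply, Matrix.one_apply, of_apply]
  split_ifs <;> simp

lemma sum_abs_le_rmax_mul [Nonempty V] {i : V} (hi : din w i ≠ 0) :
    ∑ j, |w i j| ≤ rmax w * |din w i| := by
  have h : rfun w i ≤ rmax w := le_sup' (rfun w) (mem_univ i)
  rw [rfun, if_neg hi, div_le_iff₀ (abs_pos.mpr hi)] at h
  exact h

lemma sum_subtype_abs_le_rmax_mul [Nonempty V] (S : Finset V) {i : V} (hi : din w i ≠ 0) :
    ∑ j : S, |w i j| ≤ rmax w * |din w i| := by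
  rw [sum_coe_sort S fun j => |w i j|]
  exact (sum_le_sum_of_subset_of_nonneg (subset_univ S) fun j _ _ => abs_nonneg _).trans
    (sum_abs_le_rmax_mul w hi)

lemma exists_ne_of_din_ne_zero (hloop : ∀ i, w i i = 0) {i : V} (hi : din w i ≠ 0) :
    ∃ j, j ≠ i ∧ w i j ≠ 0 := by
  obtain ⟨j, -, hj⟩ := exists_ne_zero_of_sum_ne_zero hi
  exact ⟨j, fun h => hj (h ▸ hloop i), hj⟩

end Graph

section Reachability

variable {V : Type*} {w : V → V → ℝ}

lemma IsSCC.reflTransGen_subtype {S : Finset V} (hS : IsSCC w S) (i j : S) :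
    ReflTransGen (fun x y : S => w y x ≠ 0) j i := by
  have key : ∀ x, reaches w x i → ∀ hx : x ∈ S,
      ReflTransGen (fun x y : S => w y x ≠ 0) ⟨x, hx⟩ i := by
    intro x hxi
    induction hxi using ReflTransGen.head_induction_on with
    | refl => exact fun _ => .refl
    | head hxy hyi ih =>
      intro hx
      have hy := (hS.2 i i.2 _).2 ⟨((hS.2 i i.2 _).1 hx).1.tail hxy, hyi⟩
      exact .head hxy (ih hy)
  exact key j ((hS.2 i i.2 j).1 j.2).2 j.2

/-- Among the vertices of `p`, one with fewest ancestors has ancestors forming a strongly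
connected component without incoming edges. -/
lemma exists_isSCC_of_reaches_closed [Fintype V] {p : V → Prop} (hp : ∃ i, p i)
    (hclosed : ∀ i j, p i → reaches w j i → p j) :
    ∃ S : Finset V, IsSCC w S ∧ (∀ i ∈ S, p i) ∧ ∀ i ∈ S, ∀ j, reaches w j i → j ∈ S := by
  classical
  let anc : V → Finset V := fun i => univ.filter (reaches w · i)
  have mem_anc : ∀ i j, j ∈ anc i ↔ reaches w j i := by simp [anc]
  obtain ⟨i, hi, hmin⟩ := exists_min_image (univ.filter p) (fun i => #(anc i))
    (by simpa [filter_nonempty_iff] using hp)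
  simp only [mem_filter, mem_univ, true_and] at hi hmin
  have hback : ∀ j, reaches w j i → reaches w i j := by
    intro j hj
    have hsub : anc j ⊆ anc i := fun k hk => by
      rw [mem_anc] at hk ⊢
      exact hk.trans hj
    rw [← mem_anc, eq_of_subset_of_card_le hsub (hmin j (hclosed i j hi hj)), mem_anc]
    exact .refl
  refine ⟨anc i, ⟨⟨i, (mem_anc i i).2 .refl⟩, ?_⟩, ?_, ?_⟩
  · intro j hj k
    rw [mem_anc] at hj ⊢
    exact ⟨fun hk => ⟨hj.trans (hback k hk), hk.trans (hback j hj)⟩, fun h => h.2.trans hj⟩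
  · exact fun j hj => hclosed i j hi ((mem_anc i j).1 hj)
  · intro j hj k hkj
    rw [mem_anc] at hj ⊢
    exact hkj.trans hj

end Reachability

/-- if `λ ≠ 1` is an eigenvalue of `P = I - Δ` with `|λ| = r`, then `λ` is an
eigenvalue of the Dirichlet operator `P_k = I - Δ_{V_k}` of some strongly connected
component `Γ_k` with at least two vertices, and every eigenfunction of `P_k` for `λ` has
constant modulus. -/
theorem extremal_eigenvalue_constant_modulus {V : Type*} [Fintype V] [DecidableEq V]
    [Nonempty V] (w : V → V → ℝ) (hloop : ∀ i, w i i = 0)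
    (lam : ℂ) (hne : lam ≠ 1)
    (hev : lam ∈ ((1 : Matrix V V ℂ) - lap w).charpoly.roots)
    (habs : ‖lam‖ = rmax w) :
    ∃ S : Finset V, IsSCC w S ∧ 2 ≤ S.card ∧
      lam ∈ ((1 : Matrix {x // x ∈ S} {x // x ∈ S} ℂ) - dlap w S).charpoly.roots ∧
      ∀ u : {x // x ∈ S} → ℂ, u ≠ 0 →
        Matrix.mulVec ((1 : Matrix {x // x ∈ S} {x // x ∈ S} ℂ) - dlap w S) u = lam • u →
        ∀ i j : {x // x ∈ S}, ‖u i‖ = ‖u j‖ := by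
  rw [one_sub_lap, mem_roots_charpoly_iff_exists_mulVec_eq_smul] at hev
  obtain ⟨v, hv0, hv⟩ := hev
  have hr : ∀ i, din w i ≠ 0 → ∑ j, |w i j| ≤ ‖lam‖ * |din w i| :=
    fun i hi => habs ▸ sum_abs_le_rmax_mul w hi
  obtain ⟨S, hSCC, hSmax, hSclosed⟩ := exists_isSCC_of_reaches_closed
    (p := fun i => ∀ j, ‖v j‖ ≤ ‖v i‖) (Finite.exists_max fun i => ‖v i‖)
    fun i j hi hji => norm_eq_of_forall_norm_le_of_reflTransGen hr hv hne hi hji ▸ hi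
  have hvS : ∀ i ∈ S, v i ≠ 0 := fun i hi h0 =>
    hv0 (funext fun j => norm_le_zero_iff.1 (by simpa [h0] using hSmax i hi j))
  have hdinS : ∀ i ∈ S, din w i ≠ 0 := fun i hi h0 =>
    hvS i hi (eq_zero_of_averagingMatrix_mulVec_eq_smul hv hne h0)
  obtain ⟨i, hi⟩ := hSCC.1
  refine ⟨S, hSCC, ?_, ?_, ?_⟩
  · obtain ⟨j, hji, hw⟩ := exists_ne_of_din_ne_zero w hloop (hdinS i hi)
    exact one_lt_card.2 ⟨j, hSclosed i hi j (.single hw), i, hi, hji⟩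
  · rw [one_sub_dlap, mem_roots_charpoly_iff_exists_mulVec_eq_smul]
    refine ⟨fun j => v j, fun h => hvS i hi (congrFun h ⟨i, hi⟩), funext fun j => ?_⟩
    rw [averagingMatrix_subtype_mulVec_apply, hv]
    · rfl
    · exact fun k hk => by_contra fun hw => hk (hSclosed j j.2 k (.single hw))
  · intro u _ hu j k
    rw [one_sub_dlap] at hu
    have hrS : ∀ l : S, din w l ≠ 0 → ∑ m : S, |w l m| ≤ ‖lam‖ * |din w l| :=
      fun l hl => habs ▸ sum_subtype_abs_le_rmax_mul w S hl
    have : Nonempty S := ⟨j⟩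
    obtain ⟨m, hm⟩ := Finite.exists_max fun l => ‖u l‖
    rw [norm_eq_of_forall_norm_le_of_reflTransGen hrS hu hne hm (hSCC.reflTransGen_subtype m j),
      norm_eq_of_forall_norm_le_of_reflTransGen hrS hu hne hm (hSCC.reflTransGen_subtype m k)]
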